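/- arXiv:2103.07079 — 2 statements merged into one kernel-verified Lean document; each statement's English description precedes it below -/
import Mathlib

section
/- For any integer K ≥ 1, if A, B are real symmetric positive definite d×d matrices satisfying (1 − 1/(2K)) I ⪯ A ⪯ I and (1 − 1/(2K)) I ⪯ B ⪯ I, then the symmetric matrix (AB)^K + (BA)^K is positive semidefinite. -/
/-!
In the operator norm, the hypotheses say `‖A‖, ‖B‖ ≤ 1` and `‖1 - A‖, ‖1 - B‖ ≤ 1/(2K)`.
Since `1 - ab = (1 - a) + a(1 - b)`, this gives `‖1 - AB‖ ≤ 1/K`, and the same identity applied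
`K` times gives `‖1 - (AB)^K‖ ≤ 1`. For any `M` with `‖1 - M‖ ≤ 1` one has
`Re⟪Mx, x⟫ ≥ ‖x‖² - ‖1 - M‖‖x‖² ≥ 0`, so `M + Mᴴ ⪰ 0`; apply this to `M = (AB)^K`,
whose adjoint is `(BA)^K`.
-/

section NormedRing

variable {R : Type*} [SeminormedRing R]

theorem norm_one_sub_mul_le {a : R} (b : R) (ha : ‖a‖ ≤ 1) :
    ‖1 - a * b‖ ≤ ‖1 - a‖ + ‖1 - b‖ := calc
  ‖1 - a * b‖ = ‖(1 - a) + a * (1 - b)‖ := by noncomm_ring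
  _ ≤ ‖1 - a‖ + ‖a‖ * ‖1 - b‖ := (norm_add_le _ _).trans (by gcongr; exact norm_mul_le _ _)
  _ ≤ ‖1 - a‖ + ‖1 - b‖ := by gcongr; exact mul_le_of_le_one_left (norm_nonneg _) ha

theorem norm_one_sub_pow_le {a : R} (ha : ‖a‖ ≤ 1) (n : ℕ) :
    ‖1 - a ^ n‖ ≤ n * ‖1 - a‖ := by
  induction n with
  | zero => simp
  | succ n ih => calc
      ‖1 - a ^ (n + 1)‖ = ‖1 - a * a ^ n‖ := by rw [pow_succ']
      _ ≤ ‖1 - a‖ + ‖1 - a ^ n‖ := norm_one_sub_mul_le _ ha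
      _ ≤ (n + 1 : ℕ) * ‖1 - a‖ := by push_cast; linarith

end NormedRing

namespace ContinuousLinearMap

open RCLike

variable {𝕜 E : Type*} [RCLike 𝕜] [NormedAddCommGroup E] [InnerProductSpace 𝕜 E]

theorem IsPositive.norm_le {T : E →L[𝕜] E} {c : ℝ} (hc : 0 ≤ c) (hT : T.IsPositive)
    (hTc : ((c : 𝕜) • 1 - T).IsPositive) : ‖T‖ ≤ c := by
  rw [norm_eq_iSup_rayleighQuotient T hT.isSymmetric]
  refine ciSup_le fun x => ?_
  have h0 := hT.re_inner_nonneg_left x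
  have h1 := hTc.re_inner_nonneg_left x
  simp only [sub_apply, smul_apply, one_apply_eq_self, inner_sub_left, inner_smul_left, map_sub,
    conj_ofReal, re_ofReal_mul, inner_self_eq_norm_sq] at h1
  rw [rayleighQuotient, reApplyInnerSelf_apply, abs_of_nonneg (by positivity)]
  exact div_le_of_le_mul₀ (sq_nonneg _) hc (by linarith)

theorem re_inner_apply_self_nonneg_of_norm_one_sub_le {T : E →L[𝕜] E} (hT : ‖1 - T‖ ≤ 1)
    (x : E) : 0 ≤ re (inner 𝕜 (T x) x) := by
  have h := calc re (inner 𝕜 ((1 - T) x) x) ≤ ‖(1 - T) x‖ * ‖x‖ := re_inner_le_norm _ _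
    _ ≤ ‖1 - T‖ * ‖x‖ * ‖x‖ := by gcongr; exact le_opNorm _ _
    _ ≤ ‖x‖ ^ 2 := by nlinarith [norm_nonneg x]
  simp only [sub_apply, one_apply_eq_self, inner_sub_left, map_sub, inner_self_eq_norm_sq] at h
  linarith

theorem isPositive_add_adjoint_of_norm_one_sub_le [CompleteSpace E] {T : E →L[𝕜] E}
    (hT : ‖1 - T‖ ≤ 1) : (T + adjoint T).IsPositive := by
  refine isPositive_def'.2 ⟨?_, fun x => ?_⟩
  · simpa only [star_eq_adjoint] using IsSelfAdjoint.add_star_self T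
  · rw [reApplyInnerSelf_apply, add_apply, inner_add_left, map_add, adjoint_inner_left,
      inner_re_symm x]
    have := re_inner_apply_self_nonneg_of_norm_one_sub_le hT x
    linarith

end ContinuousLinearMap

namespace Matrix

open scoped Norms.L2Operator MatrixOrder ComplexOrder

variable {𝕜 n : Type*} [RCLike 𝕜] [Fintype n] [DecidableEq n]

theorem isPositive_toEuclideanCLM_iff {A : Matrix n n 𝕜} :
    (toEuclideanCLM (n := n) (𝕜 := 𝕜) A).IsPositive ↔ A.PosSemidef := by
  rw [← ContinuousLinearMap.isPositive_toLinearMap_iff, coe_toEuclideanCLM_eq_toEuclideanLin,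
    isPositive_toEuclideanLin_iff]

theorem l2_opNorm_le_of_nonneg_of_le {S : Matrix n n 𝕜} {c : ℝ} (hc : 0 ≤ c) (h0 : 0 ≤ S)
    (h1 : S ≤ (c : 𝕜) • 1) : ‖S‖ ≤ c := by
  rw [cstar_norm_def]
  refine ContinuousLinearMap.IsPositive.norm_le hc (isPositive_toEuclideanCLM_iff.2 ?_) ?_
  · simpa [le_iff] using h0
  · rw [← map_one (toEuclideanCLM (n := n) (𝕜 := 𝕜)), ← map_smul, ← map_sub]
    exact isPositive_toEuclideanCLM_iff.2 h1

theorem l2_opNorm_le_one_and_one_sub_le_of_le {S : Matrix n n 𝕜} {ε : ℝ} (hε0 : 0 ≤ ε)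
    (hε1 : ε ≤ 1) (h1 : ((1 - ε : ℝ) : 𝕜) • 1 ≤ S) (h2 : S ≤ 1) :
    ‖S‖ ≤ 1 ∧ ‖1 - S‖ ≤ ε := by
  refine ⟨l2_opNorm_le_of_nonneg_of_le zero_le_one ?_ (by simpa using h2),
    l2_opNorm_le_of_nonneg_of_le hε0 (sub_nonneg.2 h2) ?_⟩
  · refine le_trans ?_ h1
    rw [le_iff, sub_zero]
    exact PosSemidef.one.smul (by exact_mod_cast sub_nonneg.2 hε1)
  · rw [le_iff] at h1 ⊢
    convert h1 using 1
    push_cast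
    module

theorem posSemidef_add_conjTranspose_of_l2_opNorm_one_sub_le {M : Matrix n n 𝕜}
    (h : ‖1 - M‖ ≤ 1) : (M + Mᴴ).PosSemidef := by
  rw [← isPositive_toEuclideanCLM_iff, ← star_eq_conjTranspose, map_add, map_star,
    ContinuousLinearMap.star_eq_adjoint]
  refine ContinuousLinearMap.isPositive_add_adjoint_of_norm_one_sub_le ?_
  rwa [cstar_norm_def, map_sub, map_one] at h

end Matrix

open scoped Matrix Matrix.Norms.L2Operator

theorem statement5_general (K d : ℕ) (hK : 1 ≤ K)
    (A B : Matrix (Fin d) (Fin d) ℝ)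
    (hA1 : (A - (1 - 1 / (2 * (K : ℝ))) • 1).PosSemidef)
    (hA2 : ((1 : Matrix (Fin d) (Fin d) ℝ) - A).PosSemidef)
    (hB1 : (B - (1 - 1 / (2 * (K : ℝ))) • 1).PosSemidef)
    (hB2 : ((1 : Matrix (Fin d) (Fin d) ℝ) - B).PosSemidef) :
    ((A * B) ^ K + (B * A) ^ K).PosSemidef := by
  set ε : ℝ := 1 / (2 * K) with hε
  have hε0 : 0 ≤ ε := by positivity
  have hε1 : ε ≤ 1 := by
    rw [hε, div_le_one (by positivity)]
    norm_cast; omega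
  obtain ⟨hA, hA'⟩ := Matrix.l2_opNorm_le_one_and_one_sub_le_of_le hε0 hε1 hA1 hA2
  obtain ⟨hB, hB'⟩ := Matrix.l2_opNorm_le_one_and_one_sub_le_of_le hε0 hε1 hB1 hB2
  have hAB : ‖1 - (A * B) ^ K‖ ≤ 1 := calc
    ‖1 - (A * B) ^ K‖ ≤ K * ‖1 - A * B‖ :=
      norm_one_sub_pow_le ((norm_mul_le _ _).trans (mul_le_one₀ hA (norm_nonneg _) hB)) K
    _ ≤ K * (ε + ε) := by gcongr; exact (norm_one_sub_mul_le B hA).trans (add_le_add hA' hB')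
    _ ≤ 1 := by rw [hε]; field_simp; norm_num
  have hAh : A.IsHermitian := by simpa using Matrix.isHermitian_one.sub hA2.isHermitian
  have hBh : B.IsHermitian := by simpa using Matrix.isHermitian_one.sub hB2.isHermitian
  have hBA : (B * A) ^ K = ((A * B) ^ K)ᴴ := by
    rw [Matrix.conjTranspose_pow, Matrix.conjTranspose_mul, hAh.eq, hBh.eq]
  rw [hBA]
  exact Matrix.posSemidef_add_conjTranspose_of_l2_opNorm_one_sub_le hAB

/-- For K ≥ 1 and symmetric positive definite A, B with
(1 - 1/(2K)) I ⪯ A ⪯ I and (1 - 1/(2K)) I ⪯ B ⪯ I, the matrix (AB)^K + (BA)^K is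
positive semidefinite. -/
theorem statement5 (K d : ℕ) (hK : 1 ≤ K)
    (A B : Matrix (Fin d) (Fin d) ℝ) (hA : A.PosDef) (hB : B.PosDef)
    (hA1 : (A - (1 - 1 / (2 * (K : ℝ))) • 1).PosSemidef)
    (hA2 : ((1 : Matrix (Fin d) (Fin d) ℝ) - A).PosSemidef)
    (hB1 : (B - (1 - 1 / (2 * (K : ℝ))) • 1).PosSemidef)
    (hB2 : ((1 : Matrix (Fin d) (Fin d) ℝ) - B).PosSemidef) :
    ((A * B) ^ K + (B * A) ^ K).PosSemidef :=
  statement5_general K d hK A B hA1 hA2 hB1 hB2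
end

section
/- Let M_1, …, M_n be real symmetric d×d matrices, and for a permutation σ of {1,…,n} define e_2(σ) := Σ_{1 ≤ i < j ≤ n} M_{σ(i)} M_{σ(j)}. Then −Σ_{σ, σ' ∈ S_n} (e_2(σ) − e_2(σ'))^2 ⪰ −(n−1)! · Σ_{i, j ∈ [n], i ≠ j} (M_i M_j − M_j M_i)^2, where the left sum ranges over all ordered pairs of permutations. -/
open Matrix

/-- The noncommutative second elementary symmetric polynomial associated to a permutation σ:
`e₂(σ) = Σ_{i < j} M_{σ(i)} M_{σ(j)}`. -/
noncomputable def e2 {n d : ℕ} (M : Fin n → Matrix (Fin d) (Fin d) ℝ)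
    (σ : Equiv.Perm (Fin n)) : Matrix (Fin d) (Fin d) ℝ :=
  ∑ i : Fin n, ∑ j : Fin n, if i < j then M (σ i) * M (σ j) else 0

/-!
For an adjacent transposition `τₖ = (k k+1)`, the difference `e₂(σ) - e₂(σ τₖ)` is the
commutator `[M_{σ(k)}, M_{σ(k+1)}]`. Since `e₂(σ) + e₂(σ)ᵀ = ∑_{i ≠ j} M_i M_j` does not depend
on `σ`, every difference `e₂(σ) - e₂(σ')` is skew-symmetric, so each `-(e₂(σ) - e₂(σ'))²` is
positive semidefinite, and dropping all `σ'` except the `n - 1` neighbours `σ τₖ` only decreases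
the left-hand side. What remains is `∑_σ ∑_k -[M_{σ(k)}, M_{σ(k+1)}]²`, in which every ordered
pair `i ≠ j` occurs `(n - 2)!` times for each `k`, i.e. `(n - 1)!` times in total.
-/

open Equiv Function
open scoped MatrixOrder Nat

lemma neg_sq_nonneg_of_mem_skewAdjoint {R : Type*} [Ring R] [StarRing R] [PartialOrder R]
    [StarOrderedRing R] {x : R} (hx : x ∈ skewAdjoint R) : 0 ≤ -(x ^ 2) := by
  simpa [sq, skewAdjoint.mem_iff.mp hx] using star_mul_self_nonneg x

lemma Fintype.sum_comp_le_sum_of_injective {ι κ M : Type*} [Fintype ι] [Fintype κ]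
    [AddCommMonoid M] [PartialOrder M] [IsOrderedAddMonoid M] {g : κ → ι} (hg : Injective g)
    {f : ι → M} (hf : 0 ≤ f) : ∑ k, f (g k) ≤ ∑ i, f i := by
  classical
  rw [← Finset.sum_image hg.injOn]
  exact Finset.sum_le_univ_sum_of_nonneg hf

instance Matrix.instIsAddTorsionFree {m n α : Type*} [AddMonoid α] [IsAddTorsionFree α] :
    IsAddTorsionFree (Matrix m n α) :=
  inferInstanceAs (IsAddTorsionFree (m → n → α))

section PermSums

variable {ι α : Type*} [Fintype ι] [DecidableEq ι] [AddCommMonoid α]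

lemma sum_perm_apply_apply_eq_sum_perm_apply_apply {a b c e : ι} (hab : a ≠ b) (hce : c ≠ e)
    (h : ι → ι → α) : ∑ σ : Perm ι, h (σ a) (σ b) = ∑ σ : Perm ι, h (σ c) (σ e) := by
  obtain ⟨π, hπc, hπe⟩ :=
    MulAction.is_two_pretransitive_iff.mp (Perm.isMultiplyPretransitive ι 2) hce hab
  exact Fintype.sum_equiv (Equiv.mulRight π) _ _ fun σ => by
    simp only [Perm.smul_def] at hπc hπe
    simp [hπc, hπe]

lemma sum_ite_ne_comp_perm (σ : Perm ι) (h : ι → ι → α) :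
    (∑ i, ∑ j, if i ≠ j then h (σ i) (σ j) else 0) = ∑ i, ∑ j, if i ≠ j then h i j else 0 :=
  Fintype.sum_equiv σ _ _ fun _ => Fintype.sum_equiv σ _ _ fun _ => by simp [σ.injective.ne_iff]

lemma sum_perm_apply_apply_of_ne [IsAddTorsionFree α] {a b : ι} (hab : a ≠ b) (h : ι → ι → α) :
    ∑ σ : Perm ι, h (σ a) (σ b) =
      (Fintype.card ι - 2)! • ∑ i, ∑ j, if i ≠ j then h i j else 0 := by
  set n := Fintype.card ι
  have hn : 1 < n := Fintype.one_lt_card_iff.mpr ⟨a, b, hab⟩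
  -- Count `∑_{c ≠ e} ∑_σ h (σ c) (σ e)` in two ways.
  have hpairs : ∑ c : ι, ∑ e : ι, (if c ≠ e then ∑ σ : Perm ι, h (σ c) (σ e) else 0) =
      (n * (n - 1)) • ∑ σ : Perm ι, h (σ a) (σ b) := by
    have hc : ∀ c e : ι, (if c ≠ e then ∑ σ : Perm ι, h (σ c) (σ e) else 0) =
        if c ≠ e then ∑ σ : Perm ι, h (σ a) (σ b) else 0 := fun c e => by
      split_ifs with hce
      · exact sum_perm_apply_apply_eq_sum_perm_apply_apply hce hab h
      · rfl
    simp [hc, Finset.sum_ite, Finset.filter_ne, n, mul_smul]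
  have hperms : ∑ c : ι, ∑ e : ι, (if c ≠ e then ∑ σ : Perm ι, h (σ c) (σ e) else 0) =
      n ! • ∑ i, ∑ j, if i ≠ j then h i j else 0 := by
    have hc : ∀ c e : ι, (if c ≠ e then ∑ σ : Perm ι, h (σ c) (σ e) else 0) =
        ∑ σ : Perm ι, if c ≠ e then h (σ c) (σ e) else 0 := fun c e => by
      split_ifs <;> simp
    calc _ = ∑ c : ι, ∑ σ : Perm ι, ∑ e : ι, if c ≠ e then h (σ c) (σ e) else 0 := by
          simp only [hc]; exact Fintype.sum_congr _ _ fun c => Finset.sum_comm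
      _ = ∑ σ : Perm ι, ∑ c : ι, ∑ e : ι, if c ≠ e then h (σ c) (σ e) else 0 := Finset.sum_comm
      _ = n ! • ∑ i, ∑ j, if i ≠ j then h i j else 0 := by
          simp only [sum_ite_ne_comp_perm, Finset.sum_const, Finset.card_univ,
            Fintype.card_perm, n]
  have hfact : n ! = n * (n - 1) * (n - 2)! := by
    rw [← Nat.mul_factorial_pred (by omega : n ≠ 0),
      ← Nat.mul_factorial_pred (by omega : n - 1 ≠ 0), Nat.sub_sub, mul_assoc]
  refine IsAddTorsionFree.nsmul_right_injective
    (n := n * (n - 1)) (Nat.mul_ne_zero (by omega) (by omega)) ?_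
  dsimp only
  rw [← hpairs, hperms, hfact, mul_smul]

end PermSums

lemma sum_perm_sum_apply_castSucc_apply_succ {α : Type*} [AddCommMonoid α] [IsAddTorsionFree α]
    {m : ℕ} (h : Fin (m + 1) → Fin (m + 1) → α) :
    ∑ σ : Perm (Fin (m + 1)), ∑ k : Fin m, h (σ k.castSucc) (σ k.succ) =
      m ! • ∑ i, ∑ j, if i ≠ j then h i j else 0 := by
  rw [Finset.sum_comm,
    Fintype.sum_congr _ _ fun k => sum_perm_apply_apply_of_ne k.castSucc_lt_succ.ne h]
  simp only [Fintype.card_fin, Finset.sum_const, Finset.card_univ, ← mul_smul]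
  rcases m with _ | m
  · simp
  · rw [show m + 1 + 1 - 2 = m by omega, ← Nat.factorial_succ]

section e2

variable {n d : ℕ} (M : Fin n → Matrix (Fin d) (Fin d) ℝ)

lemma e2_add_transpose (hM : ∀ i, (M i).IsSymm) (σ : Perm (Fin n)) :
    e2 M σ + (e2 M σ)ᵀ = ∑ i, ∑ j, if i ≠ j then M i * M j else 0 := by
  have ht : (e2 M σ)ᵀ = ∑ i, ∑ j, if j < i then M (σ i) * M (σ j) else 0 := by
    simp only [e2, transpose_sum, apply_ite transpose, transpose_mul, (hM _).eq, transpose_zero]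
    exact Finset.sum_comm
  rw [ht, e2, ← sum_ite_ne_comp_perm σ (fun i j => M i * M j), ← Finset.sum_add_distrib]
  refine Fintype.sum_congr _ _ fun i => ?_
  rw [← Finset.sum_add_distrib]
  refine Fintype.sum_congr _ _ fun j => ?_
  rcases lt_trichotomy i j with h | rfl | h
  · simp [h, h.ne, h.not_gt]
  · simp
  · simp [h, h.ne', h.not_gt]

lemma e2_sub_e2_mem_skewAdjoint (hM : ∀ i, (M i).IsSymm) (σ σ' : Perm (Fin n)) :
    e2 M σ - e2 M σ' ∈ skewAdjoint (Matrix (Fin d) (Fin d) ℝ) := by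
  rw [skewAdjoint.mem_iff, star_eq_conjTranspose, conjTranspose_eq_transpose_of_trivial,
    transpose_sub, eq_sub_of_add_eq' (e2_add_transpose M hM σ),
    eq_sub_of_add_eq' (e2_add_transpose M hM σ')]
  abel

end e2

lemma swap_castSucc_succ_lt_swap_iff {m : ℕ} (k : Fin m) {i j : Fin (m + 1)}
    (h₁ : (i, j) ≠ (k.castSucc, k.succ)) (h₂ : (i, j) ≠ (k.succ, k.castSucc)) :
    swap k.castSucc k.succ i < swap k.castSucc k.succ j ↔ i < j := by
  simp only [ne_eq, Prod.mk.injEq, not_and] at h₁ h₂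
  simp only [swap_apply_def]
  split_ifs <;> simp only [Fin.ext_iff, Fin.lt_def, Fin.val_castSucc, Fin.val_succ] at * <;> omega

lemma e2_sub_e2_mul_swap {m d : ℕ} (M : Fin (m + 1) → Matrix (Fin d) (Fin d) ℝ)
    (σ : Perm (Fin (m + 1))) (k : Fin m) :
    e2 M σ - e2 M (σ * swap k.castSucc k.succ) =
      M (σ k.castSucc) * M (σ k.succ) - M (σ k.succ) * M (σ k.castSucc) := by
  set τ := swap k.castSucc k.succ
  have hτ : e2 M (σ * τ) = ∑ i, ∑ j, if τ i < τ j then M (σ i) * M (σ j) else 0 :=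
    (Fintype.sum_equiv τ _ _ fun i => Fintype.sum_equiv τ _ _ fun j => by
      simp [τ, swap_apply_self]).symm
  rw [hτ]
  simp only [e2, ← Finset.sum_sub_distrib, ← Fintype.sum_prod_type']
  have hk : k.castSucc < k.succ := k.castSucc_lt_succ
  rw [Fintype.sum_eq_add (k.castSucc, k.succ) (k.succ, k.castSucc) (by simp [hk.ne])]
  · simp [τ, hk, hk.not_gt, sub_eq_add_neg]
  · rintro ⟨i, j⟩ ⟨h₁, h₂⟩
    simp only [τ, swap_castSucc_succ_lt_swap_iff k h₁ h₂, sub_self]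

lemma mul_swap_castSucc_succ_injective {m : ℕ} (σ : Perm (Fin (m + 1))) :
    Injective fun k : Fin m => σ * swap k.castSucc k.succ := by
  intro k l hkl
  have h := congrArg (· k.castSucc) (mul_left_cancel hkl)
  simp only [swap_apply_left, swap_apply_def] at h
  split_ifs at h <;> simp only [Fin.ext_iff, Fin.val_castSucc, Fin.val_succ] at * <;> omega

/-- For symmetric M₁,…,M_n,
−Σ_{σ,σ'∈Sₙ} (e₂(σ) − e₂(σ'))² ⪰ −(n−1)! Σ_{i≠j} (M_iM_j − M_jM_i)². -/
theorem statement18 (n d : ℕ) (M : Fin n → Matrix (Fin d) (Fin d) ℝ)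
    (hsymm : ∀ i, (M i).IsSymm) :
    ((-(∑ σ : Equiv.Perm (Fin n), ∑ σ' : Equiv.Perm (Fin n), (e2 M σ - e2 M σ') ^ 2))
      - (-(((n - 1).factorial : ℝ) •
          ∑ i : Fin n, ∑ j : Fin n,
            if i ≠ j then (M i * M j - M j * M i) ^ 2 else 0))).PosSemidef := by
  obtain _ | m := n
  · simp [e2, PosSemidef.zero]
  rw [← Matrix.le_iff]
  calc -(((m + 1 - 1)! : ℝ) • ∑ i, ∑ j, if i ≠ j then (M i * M j - M j * M i) ^ 2 else 0)
      = m ! • ∑ i, ∑ j, if i ≠ j then -((M i * M j - M j * M i) ^ 2) else 0 := by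
        rw [Nat.add_sub_cancel, Nat.cast_smul_eq_nsmul, ← smul_neg]
        simp only [← Finset.sum_neg_distrib, neg_ite, neg_zero]
    _ = ∑ σ : Perm (Fin (m + 1)), ∑ k : Fin m,
          -((M (σ k.castSucc) * M (σ k.succ) - M (σ k.succ) * M (σ k.castSucc)) ^ 2) :=
        (sum_perm_sum_apply_castSucc_apply_succ _).symm
    _ = ∑ σ : Perm (Fin (m + 1)), ∑ k : Fin m,
          -((e2 M σ - e2 M (σ * swap k.castSucc k.succ)) ^ 2) := by
        simp only [e2_sub_e2_mul_swap]
    _ ≤ ∑ σ : Perm (Fin (m + 1)), ∑ σ' : Perm (Fin (m + 1)), -((e2 M σ - e2 M σ') ^ 2) :=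
        Finset.sum_le_sum fun σ _ =>
          Fintype.sum_comp_le_sum_of_injective (mul_swap_castSucc_succ_injective σ) fun σ' =>
            neg_sq_nonneg_of_mem_skewAdjoint (e2_sub_e2_mem_skewAdjoint M hsymm σ σ')
    _ = -∑ σ : Perm (Fin (m + 1)), ∑ σ' : Perm (Fin (m + 1)), (e2 M σ - e2 M σ') ^ 2 := by
        simp only [Finset.sum_neg_distrib]
end
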